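/- (a) f ∉ L^1_γ(ℝ^d), i.e. ∫_{ℝ^d} f(x) |x|^{−γ} dx = ∞; (b) |f|_X < ∞; (c) for every r ∈ (0,1), f_r ∈ X, that is f_r ∈ L^1_γ(ℝ^d) and |f_r|_X < ∞; (d) |f − f_r|_X → 0 as r → 0⁺. In particular, a |·|_X-limit of elements of X need not belong to L^1_γ(ℝ^d). -/

import Mathlib

/-!
With `e = σ/(1-m) - (d-γ) > ε`, the weighted density is radial:
`f(x)|x|^{-γ} = min(|x|^{-(d+ε)}, |x|^{-(d+e)})`. In polar coordinates its integral near `0`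
becomes `∫₀ t^{-1-ε} dt = ∞`. Bounding it by `|x|^{-(d+e)}` gives tails `≲ R^{-e}` for `f` and
for every truncation, while on `{|x| < r}` the bound `|x|^{-(d+ε)}` gives
`R^e ∫_{R ≤ |x| < r} ≲ R^{e-ε} ≤ r^{e-ε} → 0`.
-/

open MeasureTheory Real

/-- The weighted tail integral `∫_{|x| ≥ R} |g(x)| |x|^{-γ} dx`. -/
noncomputable def weightedTail (d : ℕ) (γ : ℝ) (g : EuclideanSpace ℝ (Fin d) → ℝ) (R : ℝ) : ℝ :=
  ∫ x in {x : EuclideanSpace ℝ (Fin d) | R ≤ ‖x‖}, |g x| * ‖x‖ ^ (-γ)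

/-- The set of values whose supremum is the tail seminorm `|g|_X`. -/
def tailSet (d : ℕ) (γ e : ℝ) (g : EuclideanSpace ℝ (Fin d) → ℝ) : Set ℝ :=
  {y : ℝ | ∃ R : ℝ, 0 < R ∧ y = R ^ e * weightedTail d γ g R}

open Set Metric Module Filter Topology

lemma indicator_preimage_norm {E F : Type*} [Norm E] [Zero F] (s : Set ℝ) (G : ℝ → F) :
    (norm ⁻¹' s).indicator (fun x : E => G ‖x‖) = fun x => s.indicator G ‖x‖ :=
  funext fun _ => indicator_comp_right _

lemma smul_indicator_eq_indicator_smul {F : Type*} [AddCommMonoid F] [Module ℝ F]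
    (s : Set ℝ) (k : ℕ) (G : ℝ → F) :
    (fun t : ℝ => t ^ k • s.indicator G t) = s.indicator fun t => t ^ k • G t :=
  funext fun t => (indicator_smul_apply s _ G t).symm

section PolarCoordinates

variable {E F : Type*} [NormedAddCommGroup E] [NormedSpace ℝ E] [FiniteDimensional ℝ E]
  [Nontrivial E] [MeasurableSpace E] [BorelSpace E] [NormedAddCommGroup F] [NormedSpace ℝ F]
  (μ : Measure E) [μ.IsAddHaarMeasure]

lemma integrableOn_fun_norm_addHaar {s : Set ℝ} (hs : MeasurableSet s) {G : ℝ → F} :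
    IntegrableOn (fun x => G ‖x‖) (norm ⁻¹' s) μ ↔
      IntegrableOn (fun t : ℝ => t ^ (finrank ℝ E - 1) • G t) (s ∩ Ioi 0) := by
  rw [← integrableOn_indicator_iff hs, ← integrable_indicator_iff (measurable_norm hs),
    indicator_preimage_norm, integrable_fun_norm_addHaar, smul_indicator_eq_indicator_smul]

lemma setIntegral_fun_norm_addHaar {s : Set ℝ} (hs : MeasurableSet s) (G : ℝ → F) :
    ∫ x in norm ⁻¹' s, G ‖x‖ ∂μ =
      finrank ℝ E • μ.real (ball 0 1) • ∫ t in s ∩ Ioi 0, t ^ (finrank ℝ E - 1) • G t := by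
  rw [← integral_indicator (measurable_norm hs), indicator_preimage_norm,
    integral_fun_norm_addHaar, smul_indicator_eq_indicator_smul, setIntegral_indicator hs,
    inter_comm]

lemma pow_pred_smul_rpow_neg {k : ℕ} (hk : 0 < k) {t : ℝ} (ht : 0 < t) (a : ℝ) :
    t ^ (k - 1) • t ^ (-(k + a)) = t ^ (-a - 1) := by
  rw [smul_eq_mul, ← rpow_natCast, ← rpow_add ht, Nat.cast_pred hk]
  ring_nf

lemma integrableOn_norm_rpow_of_le {a R : ℝ} (ha : 0 < a) (hR : 0 < R) :
    IntegrableOn (fun x : E => ‖x‖ ^ (-(finrank ℝ E + a))) {x | R ≤ ‖x‖} μ := by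
  refine (integrableOn_fun_norm_addHaar μ measurableSet_Ici
    (G := fun t => t ^ (-(finrank ℝ E + a)))).2 ?_
  rw [inter_eq_left.2 (Ici_subset_Ioi.2 hR)]
  refine ((integrableOn_Ioi_rpow_of_lt (a := -a - 1) (by linarith) hR).congr_set_ae
    Ioi_ae_eq_Ici.symm).congr_fun (fun t ht =>
    (pow_pred_smul_rpow_neg finrank_pos (hR.trans_le ht) a).symm) measurableSet_Ici

lemma setIntegral_norm_rpow_of_le {a R : ℝ} (ha : 0 < a) (hR : 0 < R) :
    ∫ x in {x | R ≤ ‖x‖}, ‖x‖ ^ (-(finrank ℝ E + a)) ∂μ =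
      finrank ℝ E * μ.real (ball 0 1) * (R ^ (-a) / a) := by
  rw [show {x : E | R ≤ ‖x‖} = norm ⁻¹' Ici R from rfl,
    setIntegral_fun_norm_addHaar μ measurableSet_Ici (fun t => t ^ (-(finrank ℝ E + a))),
    inter_eq_left.2 (Ici_subset_Ioi.2 hR),
    integral_Ici_eq_integral_Ioi,
    setIntegral_congr_fun (g := fun t => t ^ (-a - 1)) measurableSet_Ioi fun t ht =>
      pow_pred_smul_rpow_neg finrank_pos (hR.trans ht) a,
    integral_Ioi_rpow_of_lt (by linarith) hR]
  simp only [nsmul_eq_mul, smul_eq_mul, sub_add_cancel]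
  ring

lemma not_integrable_fun_norm_of_eqOn_Ioo {a : ℝ} (ha : 0 ≤ a) {G : ℝ → ℝ}
    (hG : EqOn G (fun t => t ^ (-(finrank ℝ E + a))) (Ioo 0 1)) :
    ¬ Integrable (fun x : E => G ‖x‖) μ := by
  rw [integrable_fun_norm_addHaar]
  intro h
  have := (intervalIntegral.integrableOn_Ioo_rpow_iff (s := -a - 1) one_pos).1 <|
    (h.mono_set Ioo_subset_Ioi_self).congr_fun (fun t ht => by
      dsimp only; rw [hG ht, pow_pred_smul_rpow_neg finrank_pos ht.1 a]) measurableSet_Ioo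
  linarith

end PolarCoordinates

lemma ite_rpow_mul_rpow_eq_min {t u v w : ℝ} (ht : 0 ≤ t) (huv : u ≤ v) (hu : u + w ≠ 0)
    (hv : v + w ≠ 0) :
    (if 1 ≤ t then t ^ u else t ^ v) * t ^ w = min (t ^ (v + w)) (t ^ (u + w)) := by
  split_ifs with h
  · rw [← rpow_add' ht hu, min_eq_right (rpow_le_rpow_of_exponent_le h (by linarith))]
  · rw [← rpow_add' ht hv, min_eq_left (rpow_le_rpow_of_exponent_ge_of_imp ht (not_le.1 h).le
      (by linarith) fun _ h0 => absurd h0 hv)]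

section WeightedTail

variable {d : ℕ} {γ e : ℝ} {g : EuclideanSpace ℝ (Fin d) → ℝ}

lemma weightedTail_nonneg (R : ℝ) : 0 ≤ weightedTail d γ g R :=
  setIntegral_nonneg (measurableSet_le measurable_const measurable_norm) fun x _ =>
    mul_nonneg (abs_nonneg _) (rpow_nonneg (norm_nonneg x) _)

lemma weightedTail_le_of_le_rpow [NeZero d] {a R : ℝ} (ha : 0 < a) (hR : 0 < R)
    (hg : ∀ x, R ≤ ‖x‖ → |g x| * ‖x‖ ^ (-γ) ≤ ‖x‖ ^ (-(d + a))) :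
    weightedTail d γ g R ≤
      d * volume.real (ball (0 : EuclideanSpace ℝ (Fin d)) 1) * (R ^ (-a) / a) := by
  have hint := integrableOn_norm_rpow_of_le (E := EuclideanSpace ℝ (Fin d)) volume ha hR
  have hval := setIntegral_norm_rpow_of_le (E := EuclideanSpace ℝ (Fin d)) volume ha hR
  rw [finrank_euclideanSpace_fin] at hint hval
  rw [weightedTail, ← hval]
  refine integral_mono_of_nonneg (Eventually.of_forall fun x =>
    mul_nonneg (abs_nonneg _) (rpow_nonneg (norm_nonneg x) _)) hint ?_
  exact (ae_restrict_iff' (measurableSet_le measurable_const measurable_norm)).2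
    (Eventually.of_forall hg)

lemma tailSet_subset_Icc {c : ℝ} (h : ∀ R, 0 < R → R ^ e * weightedTail d γ g R ≤ c) :
    tailSet d γ e g ⊆ Icc 0 c := by
  rintro _ ⟨R, hR, rfl⟩
  exact ⟨mul_nonneg (rpow_nonneg hR.le _) (weightedTail_nonneg R), h R hR⟩

end WeightedTail

section Profile

variable {d : ℕ} [NeZero d] {γ e ε : ℝ} {f : EuclideanSpace ℝ (Fin d) → ℝ}
  (hf : ∀ x, f x * ‖x‖ ^ (-γ) = min (‖x‖ ^ (-(d + ε))) (‖x‖ ^ (-(d + e))))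
  (hf0 : ∀ x, 0 ≤ f x)
include hf

lemma lintegral_ofReal_mul_rpow_eq_top (hε : 0 ≤ ε) (hεe : ε ≤ e) :
    ∫⁻ x, ENNReal.ofReal (f x * ‖x‖ ^ (-γ)) = ⊤ := by
  simp_rw [hf]
  by_contra h
  refine not_integrable_fun_norm_of_eqOn_Ioo volume hε
    (G := fun t => min (t ^ (-(d + ε))) (t ^ (-(d + e)))) (fun t ht => ?_)
    ((lintegral_ofReal_ne_top_iff_integrable (by fun_prop)
      (Eventually.of_forall fun x => by positivity)).1 h)
  simp only [finrank_euclideanSpace_fin]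
  exact min_eq_left (rpow_le_rpow_of_exponent_ge ht.1 ht.2.le (by linarith))

lemma rpow_mul_weightedTail_le_of_abs_le (he : 0 < e)
    {g : EuclideanSpace ℝ (Fin d) → ℝ} (hg : ∀ x, |g x| ≤ f x) {R : ℝ} (hR : 0 < R) :
    R ^ e * weightedTail d γ g R ≤
      d * volume.real (ball (0 : EuclideanSpace ℝ (Fin d)) 1) / e := by
  have hT := weightedTail_le_of_le_rpow he hR fun x _ =>
    (mul_le_mul_of_nonneg_right (hg x) (rpow_nonneg (norm_nonneg x) _)).trans
      ((hf x).trans_le (min_le_right _ _))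
  calc R ^ e * weightedTail d γ g R
      ≤ R ^ e * (d * volume.real (ball (0 : EuclideanSpace ℝ (Fin d)) 1) * (R ^ (-e) / e)) :=
        mul_le_mul_of_nonneg_left hT (rpow_nonneg hR.le _)
    _ = d * volume.real (ball (0 : EuclideanSpace ℝ (Fin d)) 1) / e := by
        rw [rpow_neg hR.le]
        field_simp [(rpow_pos_of_pos hR e).ne']

include hf0

lemma integrable_abs_indicator_mul_rpow (hε : 0 < ε) {r : ℝ} (hr : 0 < r) :
    Integrable (fun x => |{x | r ≤ ‖x‖}.indicator f x| * ‖x‖ ^ (-γ)) := by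
  have hS : MeasurableSet {x : EuclideanSpace ℝ (Fin d) | r ≤ ‖x‖} :=
    measurableSet_le measurable_const measurable_norm
  have hint := integrableOn_norm_rpow_of_le (E := EuclideanSpace ℝ (Fin d)) volume hε hr
  rw [finrank_euclideanSpace_fin] at hint
  have heq : (fun x => |{x | r ≤ ‖x‖}.indicator f x| * ‖x‖ ^ (-γ)) =
      {x | r ≤ ‖x‖}.indicator fun x => min (‖x‖ ^ (-(d + ε))) (‖x‖ ^ (-(d + e))) := by
    ext x
    by_cases hx : x ∈ {x : EuclideanSpace ℝ (Fin d) | r ≤ ‖x‖}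
    · simp only [indicator_of_mem hx, abs_of_nonneg (hf0 x), hf]
    · simp only [indicator_of_notMem hx, abs_zero, zero_mul]
  rw [heq, integrable_indicator_iff hS]
  refine hint.mono' (by fun_prop) (Eventually.of_forall fun x => ?_)
  rw [norm_of_nonneg (by positivity)]
  exact min_le_left _ _

lemma rpow_mul_weightedTail_sub_indicator_le (hε : 0 < ε) (hεe : ε ≤ e)
    {r R : ℝ} (hr : 0 < r) (hR : 0 < R) :
    R ^ e * weightedTail d γ (fun x => f x - {x | r ≤ ‖x‖}.indicator f x) R ≤
      d * volume.real (ball (0 : EuclideanSpace ℝ (Fin d)) 1) / ε * r ^ (e - ε) := by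
  by_cases hrR : r ≤ R
  · have hT : weightedTail d γ (fun x => f x - {x | r ≤ ‖x‖}.indicator f x) R = 0 :=
      setIntegral_eq_zero_of_forall_eq_zero fun x hx => by
        have hx' : x ∈ {x : EuclideanSpace ℝ (Fin d) | r ≤ ‖x‖} := hrR.trans hx
        simp only [indicator_of_mem hx', sub_self, abs_zero, zero_mul]
    rw [hT, mul_zero]
    positivity
  have hT := weightedTail_le_of_le_rpow (γ := γ)
      (g := fun x => f x - {x | r ≤ ‖x‖}.indicator f x) hε hR fun x _ => by
    refine (mul_le_mul_of_nonneg_right ?_ (rpow_nonneg (norm_nonneg x) _)).trans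
      ((hf x).trans_le (min_le_left _ _))
    by_cases hx : x ∈ {x : EuclideanSpace ℝ (Fin d) | r ≤ ‖x‖}
    · simp only [indicator_of_mem hx, sub_self, abs_zero, hf0 x]
    · simp only [indicator_of_notMem hx, sub_zero, abs_of_nonneg (hf0 x), le_refl]
  calc R ^ e * weightedTail d γ (fun x => f x - {x | r ≤ ‖x‖}.indicator f x) R
      ≤ R ^ e * (d * volume.real (ball (0 : EuclideanSpace ℝ (Fin d)) 1) * (R ^ (-ε) / ε)) :=
        mul_le_mul_of_nonneg_left hT (rpow_nonneg hR.le _)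
    _ = d * volume.real (ball (0 : EuclideanSpace ℝ (Fin d)) 1) / ε * R ^ (e - ε) := by
        rw [sub_eq_add_neg, rpow_add hR]
        ring
    _ ≤ d * volume.real (ball (0 : EuclideanSpace ℝ (Fin d)) 1) / ε * r ^ (e - ε) := by
        gcongr
        linarith

lemma tendsto_sSup_tailSet_sub_indicator (hε : 0 < ε) (hεe : ε < e) :
    Tendsto (fun r => sSup (tailSet d γ e fun x => f x - {x | r ≤ ‖x‖}.indicator f x))
      (𝓝[>] 0) (𝓝 0) := by
  set C := d * volume.real (ball (0 : EuclideanSpace ℝ (Fin d)) 1) / ε with hC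
  have hlim : Tendsto (fun r : ℝ => C * r ^ (e - ε)) (𝓝[>] 0) (𝓝 0) := by
    simpa using (((continuous_rpow_const (sub_pos.2 hεe).le).tendsto' 0 0
      (zero_rpow (sub_pos.2 hεe).ne')).mono_left nhdsWithin_le_nhds).const_mul C
  have hIcc : ∀ r > 0, tailSet d γ e (fun x => f x - {x | r ≤ ‖x‖}.indicator f x) ⊆
      Icc 0 (C * r ^ (e - ε)) := fun r hr =>
    tailSet_subset_Icc fun R hR =>
      rpow_mul_weightedTail_sub_indicator_le hf hf0 hε hεe.le hr hR
  refine tendsto_of_tendsto_of_tendsto_of_le_of_le' tendsto_const_nhds hlim ?_ ?_ <;>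
    filter_upwards [self_mem_nhdsWithin] with r hr
  · exact Real.sSup_nonneg fun y hy => (hIcc r hr hy).1
  · exact Real.sSup_le (fun y hy => (hIcc r hr hy).2)
      (mul_nonneg (by rw [hC]; positivity) (rpow_nonneg (le_of_lt hr) _))

end Profile

theorem X_seminorm_not_complete_general
    (d : ℕ) (hd : 3 ≤ d) (γ m : ℝ)
    (σ e : ℝ) (he : e = σ / (1 - m) - ((d : ℝ) - γ))
    (ε : ℝ) (hε0 : 0 < ε) (hε1 : ε < σ / (1 - m) - ((d : ℝ) - γ))
    (f : EuclideanSpace ℝ (Fin d) → ℝ)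
    (hf : ∀ x : EuclideanSpace ℝ (Fin d),
      f x = if 1 ≤ ‖x‖ then ‖x‖ ^ (-(σ / (1 - m))) else ‖x‖ ^ (-((d : ℝ) - γ) - ε))
    (fr : ℝ → EuclideanSpace ℝ (Fin d) → ℝ)
    (hfr : ∀ r : ℝ, ∀ x : EuclideanSpace ℝ (Fin d),
      fr r x = if r ≤ ‖x‖ then f x else 0) :
    (∫⁻ x : EuclideanSpace ℝ (Fin d), ENNReal.ofReal (f x * ‖x‖ ^ (-γ)) = ⊤) ∧
    BddAbove (tailSet d γ e f) ∧
    (∀ r : ℝ, 0 < r → r < 1 →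
      Integrable (fun x : EuclideanSpace ℝ (Fin d) => |fr r x| * ‖x‖ ^ (-γ)) ∧
        BddAbove (tailSet d γ e (fr r))) ∧
    Filter.Tendsto (fun r : ℝ => sSup (tailSet d γ e (fun x => f x - fr r x)))
      (nhdsWithin 0 (Set.Ioi 0)) (nhds 0) := by
  have : NeZero d := ⟨by omega⟩
  have hd0 : (0 : ℝ) < d := by norm_cast; omega
  have hεe : ε < e := he ▸ hε1
  have hf0 : ∀ x, 0 ≤ f x := fun x => by rw [hf x]; split <;> positivity
  have hprofile : ∀ x, f x * ‖x‖ ^ (-γ) = min (‖x‖ ^ (-(d + ε))) (‖x‖ ^ (-(d + e))) := by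
    intro x
    rw [hf x, ite_rpow_mul_rpow_eq_min (norm_nonneg x) (by linarith) (by linarith : _ < (0:ℝ)).ne
      (by linarith : _ < (0:ℝ)).ne]
    congr 2 <;> linarith
  have hfr' : ∀ r, fr r = {x | r ≤ ‖x‖}.indicator f := fun r => funext fun x => by
    simp [hfr, indicator_apply]
  have hbdd : ∀ g, (∀ x, |g x| ≤ f x) → BddAbove (tailSet d γ e g) := fun g hg =>
    bddAbove_Icc.mono <| tailSet_subset_Icc fun R hR =>
      rpow_mul_weightedTail_le_of_abs_le hprofile (hε0.trans hεe) hg hR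
  simp only [hfr']
  refine ⟨lintegral_ofReal_mul_rpow_eq_top hprofile hε0.le hεe.le,
    hbdd f fun x => (abs_of_nonneg (hf0 x)).le, fun r hr _ =>
      ⟨integrable_abs_indicator_mul_rpow hprofile hf0 hε0 hr, hbdd _ fun x => ?_⟩,
    tendsto_sSup_tailSet_sub_indicator hprofile hf0 hε0 hεe⟩
  rw [abs_of_nonneg (indicator_nonneg (fun x _ => hf0 x) x)]
  exact indicator_le_self' (fun x _ => hf0 x) x

/-- A `|·|_X`-limit of elements of `X` need not belong to `L¹_γ(ℝ^d)`: the function `f`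
below is not weighted-integrable, has finite tail seminorm, and is the `|·|_X`-limit of its
truncations `f_r ∈ X` as `r → 0⁺`. -/
theorem X_seminorm_not_complete
    (d : ℕ) (hd : 3 ≤ d) (γ β m : ℝ)
    (hγ : γ < d) (hβ1 : γ - 2 < β) (hβ2 : β ≤ γ * ((d : ℝ) - 2) / d)
    (hm1 : ((d : ℝ) - 2 - β) / ((d : ℝ) - γ) < m) (hm2 : m < 1)
    (σ e : ℝ) (hσ : σ = 2 + β - γ) (he : e = σ / (1 - m) - ((d : ℝ) - γ))
    (ε : ℝ) (hε0 : 0 < ε) (hε1 : ε < σ / (1 - m) - ((d : ℝ) - γ))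
    (f : EuclideanSpace ℝ (Fin d) → ℝ)
    (hf : ∀ x : EuclideanSpace ℝ (Fin d),
      f x = if 1 ≤ ‖x‖ then ‖x‖ ^ (-(σ / (1 - m))) else ‖x‖ ^ (-((d : ℝ) - γ) - ε))
    (fr : ℝ → EuclideanSpace ℝ (Fin d) → ℝ)
    (hfr : ∀ r : ℝ, ∀ x : EuclideanSpace ℝ (Fin d),
      fr r x = if r ≤ ‖x‖ then f x else 0) :
    (∫⁻ x : EuclideanSpace ℝ (Fin d), ENNReal.ofReal (f x * ‖x‖ ^ (-γ)) = ⊤) ∧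
    BddAbove (tailSet d γ e f) ∧
    (∀ r : ℝ, 0 < r → r < 1 →
      Integrable (fun x : EuclideanSpace ℝ (Fin d) => |fr r x| * ‖x‖ ^ (-γ)) ∧
        BddAbove (tailSet d γ e (fr r))) ∧
    Filter.Tendsto (fun r : ℝ => sSup (tailSet d γ e (fun x => f x - fr r x)))
      (nhdsWithin 0 (Set.Ioi 0)) (nhds 0) :=
  X_seminorm_not_complete_general d hd γ m σ e he ε hε0 hε1 f hf fr hfr
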